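/- arXiv:1012.1495 — 3 statements merged into one kernel-verified Lean document; each statement's English description precedes it below -/
import Mathlib

section
/- The following are equivalent: (i) the system of equations d_1 + a_1 + t_2 a_2 + ⋯ + t_{i−1} a_{i−1} = t_i d_i (for i = 2, …, n) together with d_1 + a_1 + t_2 a_2 + ⋯ + t_n a_n = −d_1 admits a rational solution (t_2, …, t_n) ∈ ℚ^{n−1}; (ii) the numbers |a_1 ∧ d_1|, |a_2 ∧ d_2|, …, |a_n ∧ d_n| are all nonzero and commensurate. -/
open MeasureTheory

/-- The planar wedge (cross) product: `u ∧ v = uₓ v_y − u_y vₓ`. -/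
def wedge (u v : ℝ × ℝ) : ℝ := u.1 * v.2 - u.2 * v.1

/-- The angle in `[0, π)` of the line directed by the nonzero vector `u`. -/
noncomputable def lineAngle (u : ℝ × ℝ) : ℝ :=
  let θ := Complex.arg ⟨u.1, u.2⟩
  if θ < 0 then θ + Real.pi else if θ = Real.pi then 0 else θ

/-- A finite family of real numbers is commensurate if they are all nonzero and all
pairwise ratios are rational. -/
def Commensurate {m : ℕ} (α : Fin m → ℝ) : Prop :=
  (∀ i, α i ≠ 0) ∧ ∀ i j, ∃ q : ℚ, α i = (q : ℝ) * α j

/-- A convex polygon in the plane with `n ≥ 3` vertices listed in counterclockwise order,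
no three vertices collinear, no two edges parallel, together with the data describing
the slope ordering of its edges and, for each edge, the (unique) vertex farthest from
its supporting line.  Edge `i` (in slope order) is the segment from
`vertex (σ i)` to `vertex (σ i + 1)`. -/
structure ConvexPolygonSpokes (n : ℕ) [NeZero n] where
  three_le : 3 ≤ n
  vertex : Fin n → ℝ × ℝ
  /-- every vertex lies strictly to the left of each directed edge: this encodes
  convexity, the counterclockwise orientation, and that no three vertices are collinear -/
  convex_ccw : ∀ i j : Fin n, j ≠ i → j ≠ i + 1 →
    0 < wedge (vertex (i + 1) - vertex i) (vertex j - vertex i)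
  /-- no two edges are parallel -/
  no_parallel : ∀ i j : Fin n, i ≠ j →
    wedge (vertex (i + 1) - vertex i) (vertex (j + 1) - vertex j) ≠ 0
  /-- the permutation re-indexing the edges by slope -/
  σ : Equiv.Perm (Fin n)
  /-- the angles in `[0, π)` of the supporting lines are strictly increasing in slope order -/
  slope_sorted : StrictMono fun i : Fin n => lineAngle (vertex (σ i + 1) - vertex (σ i))
  /-- index of the vertex of the polygon farthest (in Euclidean distance, equivalently in
  the absolute wedge with the edge direction) from the supporting line of the `i`-th edge -/
  wIdx : Fin n → Fin n
  wIdx_farthest : ∀ i j : Fin n, j ≠ wIdx i →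
    |wedge (vertex (σ i + 1) - vertex (σ i)) (vertex j - vertex (σ i))| <
    |wedge (vertex (σ i + 1) - vertex (σ i)) (vertex (wIdx i) - vertex (σ i))|

namespace ConvexPolygonSpokes

variable {n : ℕ} [NeZero n] (P : ConvexPolygonSpokes n)

/-- Direction vector of the `i`-th edge (in slope order). -/
def dir (i : Fin n) : ℝ × ℝ := P.vertex (P.σ i + 1) - P.vertex (P.σ i)

/-- `v i`: the second endpoint of the `i`-th edge in the counterclockwise traversal. -/
def v (i : Fin n) : ℝ × ℝ := P.vertex (P.σ i + 1)

/-- `w i`: the vertex farthest from the supporting line of the `i`-th edge. -/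
def w (i : Fin n) : ℝ × ℝ := P.vertex (P.wIdx i)

/-- The spoke vector of the `i`-th edge: `a i = 2 (w i − v i)`. -/
def a (i : Fin n) : ℝ × ℝ := (2 : ℝ) • (P.w i - P.v i)

/-- `d i`: the unique vector parallel to edge `i` such that `a i + d i` is parallel to
edge `i+1` (written explicitly; it exists and is unique since edges `i` and `i+1`
are not parallel). -/
noncomputable def d (i : Fin n) : ℝ × ℝ :=
  (-(wedge (P.dir (i + 1)) (P.a i)) / wedge (P.dir (i + 1)) (P.dir i)) • P.dir i

/-- The polygon (as a convex body): the convex hull of its vertices. -/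
def polygon : Set (ℝ × ℝ) := convexHull ℝ (Set.range P.vertex)

/-- The closed strip bounded by the supporting line of the `i`-th edge and the parallel
line through the vertex `w i` farthest from it. -/
def strip (i : Fin n) : Set (ℝ × ℝ) :=
  {p | 0 ≤ wedge (P.dir i) (p - P.vertex (P.σ i)) ∧
    wedge (P.dir i) (p - P.vertex (P.σ i)) ≤ wedge (P.dir i) (P.w i - P.vertex (P.σ i))}

/-- `OBStep M N` holds when the outer billiard map is defined at `M ∈ ℝ² ∖ P` — i.e. there
is a vertex `A` of `P` with `(A − M) ∧ (p − M) ≤ 0` for all `p ∈ P`, with equality only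
for `p = A` — and `N = 2A − M` is the image of `M`. -/
def OBStep (M N : ℝ × ℝ) : Prop :=
  M ∉ P.polygon ∧ ∃ k : Fin n,
    (∀ p ∈ P.polygon, wedge (P.vertex k - M) (p - M) ≤ 0) ∧
    (∀ p ∈ P.polygon, wedge (P.vertex k - M) (p - M) = 0 → p = P.vertex k) ∧
    N = (2 : ℝ) • P.vertex k - M

/-- A forward orbit of the outer billiard map. -/
def IsOrbit (M : ℕ → ℝ × ℝ) : Prop := ∀ k : ℕ, P.OBStep (M k) (M (k + 1))

/-- `P` is quasi-rational: the numbers `|a i ∧ a (i+1)|` are nonzero and commensurate. -/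
def QuasiRational : Prop :=
  Commensurate fun i : Fin n => |wedge (P.a i) (P.a (i + 1))|

/-- `P` is rational: all its vertices lie on a lattice of `ℝ²`. -/
def Rational : Prop :=
  ∃ b₁ b₂ : ℝ × ℝ, LinearIndependent ℝ ![b₁, b₂] ∧
    ∀ k : Fin n, ∃ m l : ℤ, P.vertex k = (m : ℝ) • b₁ + (l : ℝ) • b₂

/-- The system `d₁ + a₁ + t₂ a₂ + ⋯ + t_{i−1} a_{i−1} = t_i d_i` (for `i = 2, …, n`),
`d₁ + a₁ + t₂ a₂ + ⋯ + t_n a_n = −d₁` has a rational solution `(t₂, …, t_n)`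
(indices shifted down by one: paper index `i` is `Fin`-index `i − 1`). -/
def SystemHasRatSolution : Prop :=
  ∃ t : Fin n → ℚ,
    (∀ i : Fin n, 0 < i →
      P.d 0 + P.a 0 + ∑ j ∈ Finset.Ioo 0 i, (t j : ℝ) • P.a j = (t i : ℝ) • P.d i) ∧
    P.d 0 + P.a 0 + ∑ j ∈ Finset.Ioi (0 : Fin n), (t j : ℝ) • P.a j = - P.d 0

end ConvexPolygonSpokes


/-!
The system is a telescoping recursion. Writing `a i + d i = μ i • d (i + 1)`, its equations
force `t i = μ 0 ⋯ μ (i - 1)`, and the closing equation is automatic because `∏ μ i = -1`.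
The geometry enters through one combinatorial fact about two edges that are consecutive in
slope order. If the turn between them is positive, they are also consecutive on the boundary
and share their farthest vertex. If it is negative, the second edge starts at the farthest
vertex of the first, and the first edge ends at the farthest vertex of the second. In both
cases `|d i ∧ d (i + 1)| = |a (i + 1) ∧ d (i + 1)|`, so
`|μ 0 ⋯ μ (i - 1)| = |a 0 ∧ d 0| / |a i ∧ d i|`. The sign of `∏ μ i` is the sign of the
product of the turns, which is negative because the slope angles go once around `[0, π)`.
-/

open Finset

section Wedge

open Real

lemma wedge_anticomm (u v : ℝ × ℝ) : wedge v u = -wedge u v := by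
  simp only [wedge]; ring

lemma wedge_self (u : ℝ × ℝ) : wedge u u = 0 := by
  simp only [wedge]; ring

lemma eq_div_smul_of_wedge_eq_zero {u v w : ℝ × ℝ} (huv : wedge u v ≠ 0)
    (hvw : wedge v w = 0) : w = (wedge u w / wedge u v) • v := by
  unfold wedge at *
  refine Prod.ext ?_ ?_ <;> simp only [Prod.smul_fst, Prod.smul_snd, smul_eq_mul] <;> field_simp
  · linear_combination (-u.1) * hvw
  · linear_combination (-u.2) * hvw

lemma wedge_smul_cos_sin (s t a b : ℝ) :
    wedge (s • (cos a, sin a)) (t • (cos b, sin b)) = s * t * sin (b - a) := by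
  simp only [wedge, Prod.smul_mk, smul_eq_mul, sin_sub]; ring

lemma lineAngle_mem_Ico (u : ℝ × ℝ) : lineAngle u ∈ Set.Ico 0 π := by
  have h₁ := Complex.neg_pi_lt_arg ⟨u.1, u.2⟩
  have h₂ := Complex.arg_le_pi ⟨u.1, u.2⟩
  dsimp only [lineAngle]
  split_ifs with h h'
  · exact ⟨by linarith, by linarith⟩
  · exact ⟨le_rfl, pi_pos⟩
  · exact ⟨not_lt.mp h, lt_of_le_of_ne h₂ h'⟩

lemma exists_eq_smul_cos_sin (u : ℝ × ℝ) :
    ∃ s : ℝ, u = s • (cos (lineAngle u), sin (lineAngle u)) := by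
  have hre : ‖(⟨u.1, u.2⟩ : ℂ)‖ * cos (Complex.arg ⟨u.1, u.2⟩) = u.1 :=
    Complex.norm_mul_cos_arg _
  have him : ‖(⟨u.1, u.2⟩ : ℂ)‖ * sin (Complex.arg ⟨u.1, u.2⟩) = u.2 :=
    Complex.norm_mul_sin_arg _
  dsimp only [lineAngle]
  generalize Complex.arg ⟨u.1, u.2⟩ = θ at hre him ⊢
  generalize ‖(⟨u.1, u.2⟩ : ℂ)‖ = r at hre him
  split_ifs with h h'
  · exact ⟨-r, Prod.ext (by simp [cos_add_pi, hre]) (by simp [sin_add_pi, him])⟩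
  · subst h'
    exact ⟨-r, Prod.ext (by simp [← hre]) (by simp [← him])⟩
  · exact ⟨r, Prod.ext (by simp [hre]) (by simp [him])⟩

lemma exists_ne_zero_eq_smul_cos_sin {u : ℝ × ℝ} (hu : u ≠ 0) :
    ∃ s : ℝ, s ≠ 0 ∧ u = s • (cos (lineAngle u), sin (lineAngle u)) := by
  obtain ⟨s, hs⟩ := exists_eq_smul_cos_sin u
  refine ⟨s, fun h => hu ?_, hs⟩
  rw [hs, h, zero_smul]

lemma wedge_mul_wedge_mul_wedge_neg_of_lineAngle_lt {x y z : ℝ × ℝ} (hx : x ≠ 0) (hy : y ≠ 0) (hz : z ≠ 0)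
    (hxy : lineAngle x < lineAngle y) (hyz : lineAngle y < lineAngle z) :
    wedge x y * wedge y z * wedge z x < 0 := by
  obtain ⟨r, hr, hxr⟩ := exists_ne_zero_eq_smul_cos_sin hx
  obtain ⟨s, hs, hys⟩ := exists_ne_zero_eq_smul_cos_sin hy
  obtain ⟨t, ht, hzt⟩ := exists_ne_zero_eq_smul_cos_sin hz
  have hx' := lineAngle_mem_Ico x
  have hz' := lineAngle_mem_Ico z
  have h₁ : 0 < sin (lineAngle y - lineAngle x) :=
    sin_pos_of_pos_of_lt_pi (by linarith) (by linarith [hx'.1, hz'.2])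
  have h₂ : 0 < sin (lineAngle z - lineAngle y) :=
    sin_pos_of_pos_of_lt_pi (by linarith) (by linarith [hx'.1, hz'.2])
  have h₃ : sin (lineAngle x - lineAngle z) < 0 :=
    sin_neg_of_neg_of_neg_pi_lt (by linarith) (by linarith [hx'.1, hz'.2])
  rw [hxr, hys, hzt, wedge_smul_cos_sin, wedge_smul_cos_sin, wedge_smul_cos_sin]
  calc _ = (r * s * t) ^ 2 * (sin (lineAngle y - lineAngle x) *
        sin (lineAngle z - lineAngle y) * sin (lineAngle x - lineAngle z)) := by ring
    _ < 0 := mul_neg_of_pos_of_neg (by positivity) (mul_neg_of_pos_of_neg (mul_pos h₁ h₂) h₃)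

lemma Fin.cyclic_lt_of_ne_of_ne_add_one {n : ℕ} [NeZero n] {i l : Fin n} (h₁ : l ≠ i)
    (h₂ : l ≠ i + 1) : (l < i ∧ i < i + 1) ∨ (i < i + 1 ∧ i + 1 < l) ∨ (i + 1 < l ∧ l < i) := by
  obtain ⟨m, rfl⟩ : ∃ m, n = m + 1 := Nat.exists_eq_add_one_of_ne_zero (NeZero.ne n)
  have hi := i.isLt
  have hl := l.isLt
  simp only [ne_eq, Fin.ext_iff, Fin.lt_def, Fin.val_add_one, Fin.val_last] at *
  split_ifs at * <;> omega

lemma wedge_mul_wedge_mul_wedge_pos_of_strictMono {n : ℕ} [NeZero n] {u : Fin n → ℝ × ℝ}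
    (hu : ∀ i, u i ≠ 0) (hmono : StrictMono (lineAngle ∘ u)) {i l : Fin n} (h₁ : l ≠ i)
    (h₂ : l ≠ i + 1) :
    0 < wedge (u i) (u (i + 1)) * wedge (u i) (u l) * wedge (u (i + 1)) (u l) := by
  suffices h : wedge (u i) (u (i + 1)) * wedge (u (i + 1)) (u l) * wedge (u l) (u i) < 0 by
    rw [wedge_anticomm (u i) (u l)] at h
    linarith
  rcases Fin.cyclic_lt_of_ne_of_ne_add_one h₁ h₂ with ⟨ha, hb⟩ | ⟨ha, hb⟩ | ⟨ha, hb⟩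
  · have := wedge_mul_wedge_mul_wedge_neg_of_lineAngle_lt (hu l) (hu i) (hu (i + 1)) (hmono ha) (hmono hb)
    linarith
  · exact wedge_mul_wedge_mul_wedge_neg_of_lineAngle_lt (hu i) (hu (i + 1)) (hu l) (hmono ha) (hmono hb)
  · have := wedge_mul_wedge_mul_wedge_neg_of_lineAngle_lt (hu (i + 1)) (hu l) (hu i) (hmono ha) (hmono hb)
    linarith

lemma prod_wedge_add_one_neg_of_strictMono {n : ℕ} [NeZero n] (hn : 1 < n) {u : Fin n → ℝ × ℝ}
    (hu : ∀ i, u i ≠ 0) (hmono : StrictMono (lineAngle ∘ u)) :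
    ∏ i, wedge (u i) (u (i + 1)) < 0 := by
  obtain ⟨m, rfl⟩ : ∃ m, n = m + 1 := Nat.exists_eq_add_one_of_ne_zero (NeZero.ne n)
  choose s hs hsu using fun i => exists_ne_zero_eq_smul_cos_sin (hu i)
  set α := lineAngle ∘ u
  have hα : ∀ i, α i ∈ Set.Ico 0 π := fun i => lineAngle_mem_Ico (u i)
  have hwedge : ∀ i, wedge (u i) (u (i + 1)) = s i * s (i + 1) * sin (α (i + 1) - α i) := by
    intro i
    rw [hsu i, hsu (i + 1), wedge_smul_cos_sin]
    rfl
  have hshift : ∏ i, s (i + 1) = ∏ i, s i :=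
    Fintype.prod_equiv (Equiv.addRight 1) _ _ fun _ => rfl
  -- only the turn from the last slope back to the first one is negative
  have hsin : ∏ i, sin (α (i + 1) - α i) < 0 := by
    rw [Fin.prod_univ_castSucc, Fin.last_add_one]
    have : NeZero m := ⟨by omega⟩
    have hlast : sin (α 0 - α (Fin.last m)) < 0 := sin_neg_of_neg_of_neg_pi_lt
      (sub_neg.mpr (hmono Fin.last_pos')) (by linarith [(hα 0).1, (hα (Fin.last m)).2])
    refine mul_neg_of_pos_of_neg (prod_pos fun i _ => ?_) hlast
    rw [Fin.coeSucc_eq_succ]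
    exact sin_pos_of_pos_of_lt_pi (sub_pos.mpr (hmono Fin.castSucc_lt_succ))
      (by linarith [(hα i.succ).2, (hα i.castSucc).1])
  simp only [hwedge, prod_mul_distrib, hshift]
  exact mul_neg_of_pos_of_neg (mul_self_pos.mpr (prod_ne_zero_iff.mpr fun i _ => hs i)) hsin

end Wedge

section CyclicSystem

theorem forall_add_sum_smul_eq_iff {K V : Type*} [Field K] [AddCommGroup V] [Module K V]
    {a d : ℕ → V} {μ τ : ℕ → K} (hμ : ∀ k, a k + d k = μ k • d (k + 1)) (hd : ∀ k, d k ≠ 0)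
    (hτ : τ 0 = 1) (m : ℕ) :
    (∀ k ≤ m, d 0 + ∑ j ∈ range k, τ j • a j = τ k • d k) ↔
      ∀ k ≤ m, τ k = ∏ j ∈ range k, μ j := by
  induction m with
  | zero => simp [hτ]
  | succ m ih =>
    simp only [Nat.le_succ_iff, or_imp, forall_and, forall_eq]
    rw [← ih]
    refine and_congr_right fun h => ?_
    rw [sum_range_succ, ← add_assoc, h m le_rfl, ← smul_add, add_comm, hμ, smul_smul,
      prod_range_succ, ← ih.mp h m le_rfl, (smul_left_injective K (hd (m + 1))).eq_iff, eq_comm]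

lemma Nat.forall_le_iff_forall_fin_and {n : ℕ} {Q : ℕ → Prop} :
    (∀ k ≤ n, Q k) ↔ (∀ i : Fin n, Q i) ∧ Q n := by
  simp only [Nat.le_iff_lt_or_eq, or_imp, forall_and, forall_eq, Fin.forall_iff]

open Fin.NatCast in
@[to_additive]
lemma Fin.prod_eq_prod_map_val {M : Type*} [CommMonoid M] {n : ℕ} [NeZero n] (f : Fin n → M)
    (s : Finset (Fin n)) : ∏ j ∈ s, f j = ∏ k ∈ s.map Fin.valEmbedding, f k := by
  simp [Fin.cast_val_eq_self]

open Fin.NatCast in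
theorem cyclic_system_iff {K V : Type*} [Field K] [AddCommGroup V] [Module K V] {n : ℕ}
    [NeZero n] {a d : Fin n → V} {μ t : Fin n → K} (hμ : ∀ i, a i + d i = μ i • d (i + 1))
    (hd : ∀ i, d i ≠ 0) (hprod : ∏ i, μ i = -1) :
    ((∀ i, 0 < i → d 0 + a 0 + ∑ j ∈ Ioo 0 i, t j • a j = t i • d i) ∧
      d 0 + a 0 + ∑ j ∈ Ioi 0, t j • a j = -d 0) ↔
    ∀ i, i ≠ 0 → t i = ∏ j ∈ Iio i, μ j := by
  -- unrolled on `ℕ`, the closing equation becomes the `n`-th one, with `τ n = -1`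
  set τ : ℕ → K := fun k => if k = 0 then 1 else if k < n then t k else -1
  have key := forall_add_sum_smul_eq_iff (a := fun k : ℕ => a k) (d := fun k : ℕ => d k)
    (μ := fun k : ℕ => μ k) (τ := τ) (fun k => by simpa [Nat.cast_succ] using hμ k)
    (fun k => hd k) (by simp [τ]) n
  have hn : n ≠ 0 := NeZero.ne n
  have hτn : τ n = -1 := by simp [τ, hn]
  have hτi : ∀ i : Fin n, i ≠ 0 → τ i = t i := fun i hi => by simp [τ, hi]
  have hsum : ∀ k, 0 < k → k ≤ n →
      a 0 + ∑ j ∈ Ioo 0 k, t j • a j = ∑ j ∈ range k, τ j • a j := by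
    intro k hk hkn
    rw [range_eq_Ico, sum_eq_sum_Ico_succ_bot hk, Ico_add_one_left_eq_Ioo]
    refine congrArg₂ _ (by simp [τ]) (sum_congr rfl fun j hj => ?_)
    rw [mem_Ioo] at hj
    simp [τ, hj.1.ne', show j < n by omega]
  rw [Nat.forall_le_iff_forall_fin_and, Nat.forall_le_iff_forall_fin_and] at key
  simp only [Fin.cast_val_eq_self, Fin.natCast_self, Nat.cast_zero] at key
  convert key using 1
  · refine and_congr (forall_congr' fun i => ?_) ?_
    · rcases eq_or_ne i 0 with rfl | hi
      · simp [τ]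
      · rw [add_assoc, Fin.sum_eq_sum_map_val, Fin.map_valEmbedding_Ioo, Fin.val_zero,
          hsum i (Fin.pos_iff_ne_zero.mpr hi) i.isLt.le, hτi i hi]
        simp [Fin.pos_iff_ne_zero, hi]
    · rw [add_assoc, Fin.sum_eq_sum_map_val, Fin.map_valEmbedding_Ioi, Fin.val_zero,
        hsum n (Nat.pos_of_ne_zero hn) le_rfl, hτn, neg_one_smul]
  · rw [hτn, ← Fin.prod_univ_eq_prod_range (fun k => μ k) n]
    simp only [Fin.cast_val_eq_self, hprod, and_true]
    refine forall_congr' fun i => ?_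
    rcases eq_or_ne i 0 with rfl | hi
    · simp [τ]
    · rw [Fin.prod_eq_prod_map_val, Fin.map_valEmbedding_Iio, Nat.Iio_eq_range, hτi i hi]
      simp [hi]

end CyclicSystem

section Rationality

lemma prod_range_div_eq_div {K : Type*} [Field K] {f : ℕ → K} (hf : ∀ k, f k ≠ 0) (m : ℕ) :
    ∏ k ∈ range m, f k / f (k + 1) = f 0 / f m := by
  induction m with
  | zero => simp [hf 0]
  | succ m ih => rw [prod_range_succ, ih, div_mul_div_cancel₀ (hf m)]

lemma exists_rat_eq_iff_exists_rat_eq_abs (x : ℝ) :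
    (∃ q : ℚ, (q : ℝ) = x) ↔ ∃ q : ℚ, (q : ℝ) = |x| := by
  refine ⟨fun ⟨q, hq⟩ => ⟨|q|, by rw [Rat.cast_abs, hq]⟩, fun ⟨q, hq⟩ => ?_⟩
  rcases abs_choice x with h | h
  · exact ⟨q, hq.trans h⟩
  · exact ⟨-q, by rw [Rat.cast_neg, hq, h, neg_neg]⟩

lemma commensurate_iff_forall_exists_rat {m : ℕ} {α : Fin m → ℝ} (i₀ : Fin m) :
    Commensurate α ↔ (∀ i, α i ≠ 0) ∧ ∀ j, ∃ q : ℚ, α i₀ = q * α j := by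
  refine ⟨fun h => ⟨h.1, fun j => h.2 i₀ j⟩, fun ⟨h₀, h⟩ => ⟨h₀, fun i j => ?_⟩⟩
  obtain ⟨p, hp⟩ := h i
  obtain ⟨q, hq⟩ := h j
  have hp₀ : (p : ℝ) ≠ 0 := fun e => h₀ i₀ (by rw [hp, e, zero_mul])
  refine ⟨q / p, ?_⟩
  rw [Rat.cast_div, div_mul_eq_mul_div, ← hq, hp, mul_div_cancel_left₀ _ hp₀]

end Rationality

namespace ConvexPolygonSpokes

variable {n : ℕ} [NeZero n] (P : ConvexPolygonSpokes n)

/-- Edges indexed along the boundary; `dir` indexes the same vectors in slope order. -/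
def edge (j : Fin n) : ℝ × ℝ := P.vertex (j + 1) - P.vertex j

lemma dir_eq_edge (i : Fin n) : P.dir i = P.edge (P.σ i) := rfl

lemma add_one_ne_self (P : ConvexPolygonSpokes n) (j : Fin n) : j + 1 ≠ j := by
  have := P.three_le
  rw [Ne, add_eq_left, Fin.one_eq_zero_iff]
  omega

lemma add_one_add_one_ne_self (P : ConvexPolygonSpokes n) (j : Fin n) : j + 1 + 1 ≠ j := by
  have := P.three_le
  obtain ⟨m, rfl⟩ : ∃ m, n = m + 1 := Nat.exists_eq_add_one_of_ne_zero (NeZero.ne n)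
  have := j.isLt
  simp only [Ne, Fin.ext_iff, Fin.val_add_one, Fin.val_last]
  split_ifs <;> simp_all <;> omega

lemma sub_one_ne_self (P : ConvexPolygonSpokes n) (j : Fin n) : j - 1 ≠ j := fun h =>
  P.add_one_ne_self (j - 1) (by rw [sub_add_cancel]; exact h.symm)

lemma wedge_edge_vertex_sub_pos {j m : Fin n} (h₁ : m ≠ j) (h₂ : m ≠ j + 1) :
    0 < wedge (P.edge j) (P.vertex m - P.vertex j) :=
  P.convex_ccw j m h₁ h₂

lemma wedge_edge_vertex_sub_nonneg (j m : Fin n) :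
    0 ≤ wedge (P.edge j) (P.vertex m - P.vertex j) := by
  by_cases h₁ : m = j
  · simp [h₁, wedge]
  by_cases h₂ : m = j + 1
  · rw [h₂, ← edge, wedge_self]
  exact (P.wedge_edge_vertex_sub_pos h₁ h₂).le

lemma wedge_edge_vertex_sub_add_one (j m : Fin n) :
    wedge (P.edge j) (P.vertex m - P.vertex (j + 1)) =
      wedge (P.edge j) (P.vertex m - P.vertex j) := by
  simp only [edge, wedge, Prod.fst_sub, Prod.snd_sub]; ring

lemma wedge_edge_edge_add_one_pos (j : Fin n) : 0 < wedge (P.edge j) (P.edge (j + 1)) := by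
  have := P.wedge_edge_vertex_sub_pos (P.add_one_add_one_ne_self j) (P.add_one_ne_self (j + 1))
  rwa [← P.wedge_edge_vertex_sub_add_one] at this

lemma edge_ne_zero (j : Fin n) : P.edge j ≠ 0 := fun h => by
  simpa [h, wedge] using P.wedge_edge_edge_add_one_pos j

lemma dir_ne_zero (i : Fin n) : P.dir i ≠ 0 := P.edge_ne_zero _

/-- By convexity, a local maximum of `wedge u ·` on the vertices is a strict global one. -/
lemma wedge_vertex_sub_neg_of_sign_change {u : ℝ × ℝ} {k : Fin n}
    (h₁ : 0 < wedge u (P.edge (k - 1))) (h₂ : wedge u (P.edge k) < 0) {m : Fin n} (hm : m ≠ k) :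
    wedge u (P.vertex m - P.vertex k) < 0 := by
  set x := P.edge (k - 1)
  set y := P.edge k
  set z := P.vertex m - P.vertex k
  have hxy : 0 < wedge x y := by simpa using P.wedge_edge_edge_add_one_pos (k - 1)
  have hxz : 0 ≤ wedge x z := by
    have := P.wedge_edge_vertex_sub_nonneg (k - 1) m
    rwa [← P.wedge_edge_vertex_sub_add_one, sub_add_cancel] at this
  have hyz : 0 ≤ wedge y z := P.wedge_edge_vertex_sub_nonneg k m
  have hstrict : 0 < wedge x z ∨ 0 < wedge y z := by
    by_cases hm' : m = k + 1
    · have hzy : z = y := by simp only [z, y, edge, hm']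
      exact Or.inl (hzy ▸ hxy)
    · exact Or.inr (P.wedge_edge_vertex_sub_pos hm hm')
  have hplucker : wedge u z * wedge x y = wedge u y * wedge x z + wedge x u * wedge y z := by
    simp only [wedge]; ring
  have hxu : wedge x u < 0 := by rw [wedge_anticomm]; linarith
  have : wedge u z * wedge x y < 0 := by rcases hstrict with h | h <;> nlinarith
  exact neg_of_mul_neg_left this hxy.le

lemma wedge_dir_vertex_sub_nonneg (i m : Fin n) :
    0 ≤ wedge (P.dir i) (P.vertex m - P.vertex (P.σ i)) :=
  P.wedge_edge_vertex_sub_nonneg _ m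

lemma wedge_dir_vertex_sub_w_neg {i m : Fin n} (hm : m ≠ P.wIdx i) :
    wedge (P.dir i) (P.vertex m - P.w i) < 0 := by
  have h : |wedge (P.dir i) (P.vertex m - P.vertex (P.σ i))| <
      |wedge (P.dir i) (P.vertex (P.wIdx i) - P.vertex (P.σ i))| := P.wIdx_farthest i m hm
  rw [abs_of_nonneg (P.wedge_dir_vertex_sub_nonneg i m),
    abs_of_nonneg (P.wedge_dir_vertex_sub_nonneg i _)] at h
  have : wedge (P.dir i) (P.vertex m - P.w i) =
      wedge (P.dir i) (P.vertex m - P.vertex (P.σ i)) -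
        wedge (P.dir i) (P.vertex (P.wIdx i) - P.vertex (P.σ i)) := by
    simp only [w, wedge, Prod.fst_sub, Prod.snd_sub]; ring
  linarith

lemma wedge_dir_edge_wIdx_neg (i : Fin n) : wedge (P.dir i) (P.edge (P.wIdx i)) < 0 :=
  P.wedge_dir_vertex_sub_w_neg (P.add_one_ne_self _)

lemma wedge_dir_edge_wIdx_sub_one_pos (i : Fin n) :
    0 < wedge (P.dir i) (P.edge (P.wIdx i - 1)) := by
  have h := P.wedge_dir_vertex_sub_w_neg (P.sub_one_ne_self (P.wIdx i))
  have : wedge (P.dir i) (P.edge (P.wIdx i - 1)) =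
      -wedge (P.dir i) (P.vertex (P.wIdx i - 1) - P.w i) := by
    simp only [edge, w, sub_add_cancel, wedge, Prod.fst_sub, Prod.snd_sub]; ring
  linarith

lemma wIdx_ne_σ (i : Fin n) : P.wIdx i ≠ P.σ i := fun h => by
  simpa [h, ← dir_eq_edge, wedge_self] using P.wedge_dir_edge_wIdx_neg i

lemma wIdx_ne_σ_add_one (i : Fin n) : P.wIdx i ≠ P.σ i + 1 := fun h => by
  simpa [h, ← dir_eq_edge, wedge_self] using P.wedge_dir_edge_wIdx_sub_one_pos i

lemma wIdx_eq_of_sign_change {i k : Fin n} (h₁ : 0 < wedge (P.dir i) (P.edge (k - 1)))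
    (h₂ : wedge (P.dir i) (P.edge k) < 0) : P.wIdx i = k := by
  by_contra hk
  have h := P.wedge_vertex_sub_neg_of_sign_change h₁ h₂ hk
  have h' := P.wedge_dir_vertex_sub_w_neg (Ne.symm hk)
  have : wedge (P.dir i) (P.vertex (P.wIdx i) - P.vertex k) =
      -wedge (P.dir i) (P.vertex k - P.w i) := by
    simp only [w, wedge, Prod.fst_sub, Prod.snd_sub]; ring
  linarith

/-- `wedge (P.dir i) ·` attains its minimum on the whole edge `P.σ i`, so it has no strict
local minimum on the vertices. -/
lemma wedge_dir_edge_nonpos_of_neg {i k : Fin n} (h : wedge (P.dir i) (P.edge (k - 1)) < 0) :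
    wedge (P.dir i) (P.edge k) ≤ 0 := by
  by_contra! hk
  rcases eq_or_ne k (P.σ i) with rfl | hS
  · simp [← dir_eq_edge, wedge_self] at hk
  have hmin := P.wedge_vertex_sub_neg_of_sign_change (u := -P.dir i)
    (by simpa [wedge] using h) (by simpa [wedge] using hk) hS.symm
  have := P.wedge_dir_vertex_sub_nonneg i k
  have : wedge (-P.dir i) (P.vertex (P.σ i) - P.vertex k) =
      wedge (P.dir i) (P.vertex k - P.vertex (P.σ i)) := by
    simp only [wedge, Prod.fst_sub, Prod.snd_sub, Prod.fst_neg, Prod.snd_neg]; ring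
  linarith

def slopeTurn (i : Fin n) : ℝ := wedge (P.dir i) (P.dir (i + 1))

lemma slopeTurn_ne_zero (i : Fin n) : P.slopeTurn i ≠ 0 :=
  P.no_parallel _ _ fun h => P.add_one_ne_self i (P.σ.injective h).symm

lemma prod_slopeTurn_neg : ∏ i, P.slopeTurn i < 0 :=
  prod_wedge_add_one_neg_of_strictMono (by linarith [P.three_le]) P.dir_ne_zero P.slope_sorted

/-- No line of another edge separates two lines consecutive in slope order, so the turn
between them decides whether an edge lies on the same side of both. -/
lemma slopeTurn_mul_wedge_mul_wedge_pos {i j : Fin n} (h₁ : j ≠ P.σ i) (h₂ : j ≠ P.σ (i + 1)) :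
    0 < P.slopeTurn i * wedge (P.dir i) (P.edge j) * wedge (P.dir (i + 1)) (P.edge j) := by
  have hj : P.edge j = P.dir (P.σ.symm j) := by simp [dir_eq_edge]
  rw [hj]
  exact wedge_mul_wedge_mul_wedge_pos_of_strictMono P.dir_ne_zero P.slope_sorted
    (fun h => h₁ (by rw [← h, Equiv.apply_symm_apply]))
    (fun h => h₂ (by rw [← h, Equiv.apply_symm_apply]))

lemma wedge_dir_add_one_edge_σ_add_one_sub_one_neg (i : Fin n) :
    wedge (P.dir (i + 1)) (P.edge (P.σ (i + 1) - 1)) < 0 := by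
  have := P.wedge_edge_edge_add_one_pos (P.σ (i + 1) - 1)
  rw [sub_add_cancel, ← dir_eq_edge, wedge_anticomm] at this
  linarith

lemma σ_add_one_of_slopeTurn_pos {i : Fin n} (h : 0 < P.slopeTurn i) :
    P.σ (i + 1) = P.σ i + 1 := by
  by_contra hM
  have hS : P.σ (i + 1) - 1 ≠ P.σ i := fun e => hM (by rw [← e, sub_add_cancel])
  have := P.slopeTurn_mul_wedge_mul_wedge_pos hS (P.sub_one_ne_self _)
  have hB := P.wedge_dir_add_one_edge_σ_add_one_sub_one_neg i
  have hA : wedge (P.dir i) (P.edge (P.σ (i + 1) - 1)) < 0 := by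
    nlinarith [mul_pos h (neg_pos.mpr hB)]
  exact (P.wedge_dir_edge_nonpos_of_neg hA).not_gt h

lemma wIdx_add_one_of_slopeTurn_pos {i : Fin n} (h : 0 < P.slopeTurn i) :
    P.wIdx (i + 1) = P.wIdx i := by
  have hσ := P.σ_add_one_of_slopeTurn_pos h
  have hw₁ := P.wedge_dir_edge_wIdx_sub_one_pos i
  have hw₂ := P.wedge_dir_edge_wIdx_neg i
  have hS₁ : P.wIdx i - 1 ≠ P.σ i := fun e =>
    P.wIdx_ne_σ_add_one i (by rw [← e, sub_add_cancel])
  have hM : P.wIdx i ≠ P.σ (i + 1) := hσ ▸ P.wIdx_ne_σ_add_one i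
  have hB : wedge (P.dir (i + 1)) (P.edge (P.wIdx i)) < 0 := by
    have := P.slopeTurn_mul_wedge_mul_wedge_pos (P.wIdx_ne_σ i) hM
    nlinarith [mul_neg_of_pos_of_neg h hw₂]
  have hM₁ : P.wIdx i - 1 ≠ P.σ (i + 1) := fun e => by
    have := P.wedge_edge_edge_add_one_pos (P.wIdx i - 1)
    rw [sub_add_cancel, e, ← dir_eq_edge] at this
    linarith
  have hA : 0 < wedge (P.dir (i + 1)) (P.edge (P.wIdx i - 1)) := by
    have := P.slopeTurn_mul_wedge_mul_wedge_pos hS₁ hM₁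
    nlinarith [mul_pos h hw₁]
  exact P.wIdx_eq_of_sign_change hA hB

lemma σ_add_one_of_slopeTurn_neg {i : Fin n} (h : P.slopeTurn i < 0) :
    P.σ (i + 1) = P.wIdx i := by
  have hS : P.σ (i + 1) - 1 ≠ P.σ i := fun e => by
    have e' : P.σ i + 1 = P.σ (i + 1) := by rw [← e, sub_add_cancel]
    have := P.wedge_edge_edge_add_one_pos (P.σ i)
    rw [e', ← dir_eq_edge, ← dir_eq_edge] at this
    exact lt_asymm this h
  have := P.slopeTurn_mul_wedge_mul_wedge_pos hS (P.sub_one_ne_self _)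
  have hB := P.wedge_dir_add_one_edge_σ_add_one_sub_one_neg i
  have hA : 0 < wedge (P.dir i) (P.edge (P.σ (i + 1) - 1)) := by
    nlinarith [mul_pos_of_neg_of_neg h hB]
  exact (P.wIdx_eq_of_sign_change hA h).symm

lemma wIdx_add_one_of_slopeTurn_neg {i : Fin n} (h : P.slopeTurn i < 0) :
    P.wIdx (i + 1) = P.σ i + 1 := by
  have hM : P.σ i + 1 ≠ P.σ (i + 1) :=
    P.σ_add_one_of_slopeTurn_neg h ▸ (P.wIdx_ne_σ_add_one i).symm
  have := P.slopeTurn_mul_wedge_mul_wedge_pos (P.add_one_ne_self _) hM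
  have hA := P.wedge_edge_edge_add_one_pos (P.σ i)
  rw [← dir_eq_edge] at hA
  refine P.wIdx_eq_of_sign_change ?_ (by nlinarith [mul_neg_of_neg_of_pos h hA])
  rw [add_sub_cancel_right, ← dir_eq_edge, wedge_anticomm]
  exact neg_pos.mpr h

lemma wedge_dir_a (i : Fin n) :
    wedge (P.dir i) (P.a i) = 2 * wedge (P.dir i) (P.w i - P.vertex (P.σ i)) := by
  simp only [a, v, dir, wedge, Prod.fst_sub, Prod.snd_sub, Prod.smul_fst, Prod.smul_snd,
    smul_eq_mul]
  ring

lemma wedge_dir_a_pos (i : Fin n) : 0 < wedge (P.dir i) (P.a i) := by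
  rw [wedge_dir_a]
  exact mul_pos two_pos (P.wedge_edge_vertex_sub_pos (P.wIdx_ne_σ i) (P.wIdx_ne_σ_add_one i))

lemma wedge_dir_add_one_a_of_slopeTurn_pos {i : Fin n} (h : 0 < P.slopeTurn i) :
    wedge (P.dir (i + 1)) (P.a i) = wedge (P.dir (i + 1)) (P.a (i + 1)) := by
  rw [P.wedge_dir_a (i + 1), w, P.wIdx_add_one_of_slopeTurn_pos h,
    P.σ_add_one_of_slopeTurn_pos h]
  simp only [a, v, w, wedge, Prod.fst_sub, Prod.snd_sub, Prod.smul_fst, Prod.smul_snd,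
    smul_eq_mul]
  ring

lemma wedge_dir_add_one_a_of_slopeTurn_neg {i : Fin n} (h : P.slopeTurn i < 0) :
    wedge (P.dir (i + 1)) (P.a i) = -wedge (P.dir (i + 1)) (P.a (i + 1)) := by
  rw [P.wedge_dir_a (i + 1), w, P.wIdx_add_one_of_slopeTurn_neg h,
    P.σ_add_one_of_slopeTurn_neg h]
  simp only [a, v, w, wedge, Prod.fst_sub, Prod.snd_sub, Prod.smul_fst, Prod.smul_snd,
    smul_eq_mul]
  ring

lemma slopeTurn_mul_wedge_dir_add_one_a_pos (i : Fin n) :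
    0 < P.slopeTurn i * wedge (P.dir (i + 1)) (P.a i) := by
  have hA := P.wedge_dir_a_pos (i + 1)
  rcases (P.slopeTurn_ne_zero i).lt_or_gt with h | h
  · rw [P.wedge_dir_add_one_a_of_slopeTurn_neg h]
    exact mul_pos_of_neg_of_neg h (neg_neg_of_pos hA)
  · rw [P.wedge_dir_add_one_a_of_slopeTurn_pos h]
    exact mul_pos h hA

lemma abs_wedge_dir_add_one_a (i : Fin n) :
    |wedge (P.dir (i + 1)) (P.a i)| = wedge (P.dir (i + 1)) (P.a (i + 1)) := by
  have hA := P.wedge_dir_a_pos (i + 1)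
  rcases (P.slopeTurn_ne_zero i).lt_or_gt with h | h
  · rw [P.wedge_dir_add_one_a_of_slopeTurn_neg h, abs_neg, abs_of_pos hA]
  · rw [P.wedge_dir_add_one_a_of_slopeTurn_pos h, abs_of_pos hA]

noncomputable def dScale (i : Fin n) : ℝ := wedge (P.dir (i + 1)) (P.a i) / P.slopeTurn i

lemma d_eq_dScale_smul (i : Fin n) : P.d i = P.dScale i • P.dir i := by
  rw [d, dScale, slopeTurn, wedge_anticomm (P.dir i), neg_div_neg_eq]

lemma dScale_mul_slopeTurn (i : Fin n) :
    P.dScale i * P.slopeTurn i = wedge (P.dir (i + 1)) (P.a i) :=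
  div_mul_cancel₀ _ (P.slopeTurn_ne_zero i)

lemma dScale_pos (i : Fin n) : 0 < P.dScale i := by
  have h := P.slopeTurn_mul_wedge_dir_add_one_a_pos i
  rcases (P.slopeTurn_ne_zero i).lt_or_gt with hT | hT
  · exact div_pos_of_neg_of_neg (by nlinarith) hT
  · exact div_pos (by nlinarith) hT

lemma d_ne_zero (i : Fin n) : P.d i ≠ 0 := by
  rw [d_eq_dScale_smul]
  exact smul_ne_zero (P.dScale_pos i).ne' (P.dir_ne_zero i)

lemma wedge_a_d (i : Fin n) :
    wedge (P.a i) (P.d i) = -(P.dScale i * wedge (P.dir i) (P.a i)) := by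
  rw [d_eq_dScale_smul]
  simp only [wedge, Prod.smul_fst, Prod.smul_snd, smul_eq_mul]
  ring

lemma wedge_a_d_neg (i : Fin n) : wedge (P.a i) (P.d i) < 0 := by
  rw [wedge_a_d, neg_neg_iff_pos]
  exact mul_pos (P.dScale_pos i) (P.wedge_dir_a_pos i)

lemma wedge_d_d (i : Fin n) :
    wedge (P.d i) (P.d (i + 1)) = P.dScale i * P.dScale (i + 1) * P.slopeTurn i := by
  rw [d_eq_dScale_smul, d_eq_dScale_smul, slopeTurn]
  simp only [wedge, Prod.smul_fst, Prod.smul_snd, smul_eq_mul]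
  ring

lemma abs_wedge_d_d (i : Fin n) :
    |wedge (P.d i) (P.d (i + 1))| = |wedge (P.a (i + 1)) (P.d (i + 1))| := by
  rw [wedge_d_d, wedge_a_d, abs_neg, mul_right_comm, dScale_mul_slopeTurn, abs_mul, abs_mul,
    abs_wedge_dir_add_one_a, abs_of_pos (P.dScale_pos _), abs_of_pos (P.wedge_dir_a_pos _)]
  ring

lemma wedge_d_add_one_a_add_d (i : Fin n) : wedge (P.d (i + 1)) (P.a i + P.d i) = 0 := by
  have hB := P.dScale_mul_slopeTurn i
  rw [slopeTurn] at hB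
  rw [d_eq_dScale_smul, d_eq_dScale_smul]
  simp only [wedge, Prod.smul_fst, Prod.smul_snd, smul_eq_mul, Prod.fst_add, Prod.snd_add] at hB ⊢
  linear_combination (-P.dScale (i + 1)) * hB

noncomputable def stepRatio (i : Fin n) : ℝ :=
  -wedge (P.a i) (P.d i) / wedge (P.d i) (P.d (i + 1))

lemma a_add_d_eq_stepRatio_smul (i : Fin n) : P.a i + P.d i = P.stepRatio i • P.d (i + 1) := by
  have hdd : wedge (P.d i) (P.d (i + 1)) ≠ 0 := by
    rw [wedge_d_d]
    exact mul_ne_zero (mul_pos (P.dScale_pos i) (P.dScale_pos _)).ne' (P.slopeTurn_ne_zero i)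
  rw [eq_div_smul_of_wedge_eq_zero hdd (P.wedge_d_add_one_a_add_d i), stepRatio]
  congr 2
  simp only [wedge, Prod.fst_add, Prod.snd_add]
  ring

lemma abs_stepRatio (i : Fin n) :
    |P.stepRatio i| = |wedge (P.a i) (P.d i)| / |wedge (P.a (i + 1)) (P.d (i + 1))| := by
  rw [stepRatio, abs_div, abs_neg, abs_wedge_d_d]

lemma stepRatio_mul_slopeTurn_pos (i : Fin n) : 0 < P.stepRatio i * P.slopeTurn i := by
  have hT := P.slopeTurn_ne_zero i
  have : P.stepRatio i * P.slopeTurn i =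
      -wedge (P.a i) (P.d i) / (P.dScale i * P.dScale (i + 1)) := by
    rw [stepRatio, wedge_d_d]
    field_simp
  rw [this]
  exact div_pos (neg_pos.mpr (P.wedge_a_d_neg i)) (mul_pos (P.dScale_pos i) (P.dScale_pos _))

lemma prod_stepRatio : ∏ i, P.stepRatio i = -1 := by
  have hneg : ∏ i, P.stepRatio i < 0 := by
    have hpos : 0 < (∏ i, P.stepRatio i) * ∏ i, P.slopeTurn i := by
      rw [← prod_mul_distrib]
      exact prod_pos fun i _ => P.stepRatio_mul_slopeTurn_pos i
    exact neg_of_mul_pos_left hpos P.prod_slopeTurn_neg.le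
  have habs : |∏ i, P.stepRatio i| = 1 := by
    rw [abs_prod, prod_congr rfl fun i _ => P.abs_stepRatio i, prod_div_distrib,
      Fintype.prod_equiv (Equiv.addRight 1) (fun i => |wedge (P.a (i + 1)) (P.d (i + 1))|)
        (fun i => |wedge (P.a i) (P.d i)|) fun _ => rfl]
    exact div_self (prod_ne_zero_iff.mpr fun i _ => abs_ne_zero.mpr (P.wedge_a_d_neg i).ne)
  linarith [abs_of_neg hneg]

open Fin.NatCast in
lemma abs_prod_stepRatio (i : Fin n) :
    |∏ j ∈ Iio i, P.stepRatio j| = |wedge (P.a 0) (P.d 0)| / |wedge (P.a i) (P.d i)| := by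
  rw [abs_prod, Fin.prod_eq_prod_map_val, Fin.map_valEmbedding_Iio, Nat.Iio_eq_range,
    prod_congr rfl fun k _ => by rw [P.abs_stepRatio, ← Nat.cast_succ],
    prod_range_div_eq_div fun k => abs_ne_zero.mpr (P.wedge_a_d_neg k).ne]
  simp

lemma systemHasRatSolution_iff :
    P.SystemHasRatSolution ↔ ∀ i, ∃ q : ℚ, (q : ℝ) = ∏ j ∈ Iio i, P.stepRatio j := by
  refine (exists_congr fun (t : Fin n → ℚ) => cyclic_system_iff (t := fun j => (t j : ℝ))
    P.a_add_d_eq_stepRatio_smul P.d_ne_zero P.prod_stepRatio).trans ⟨?_, fun h => ?_⟩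
  · rintro ⟨t, ht⟩ i
    rcases eq_or_ne i 0 with rfl | hi
    · exact ⟨1, by rw [Rat.cast_one, ← bot_eq_zero, Iio_bot, prod_empty]⟩
    · exact ⟨t i, ht i hi⟩
  · choose t ht using h
    exact ⟨t, fun i _ => ht i⟩

end ConvexPolygonSpokes

/-- the system has a rational solution iff the numbers `|a i ∧ d i|`
are all nonzero and commensurate. -/
theorem system_iff_ad_commensurate {n : ℕ} [NeZero n] (P : ConvexPolygonSpokes n) :
    P.SystemHasRatSolution ↔
      Commensurate fun i : Fin n => |wedge (P.a i) (P.d i)| := by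
  have had : ∀ i, |wedge (P.a i) (P.d i)| ≠ 0 := fun i => abs_ne_zero.mpr (P.wedge_a_d_neg i).ne
  rw [commensurate_iff_forall_exists_rat 0, and_iff_right had, P.systemHasRatSolution_iff]
  refine forall_congr' fun i => ?_
  rw [exists_rat_eq_iff_exists_rat_eq_abs, P.abs_prod_stepRatio]
  simp_rw [eq_div_iff (had i), eq_comm]
end

section
/- There exists a nonempty subset S ⊆ {1, …, n} such that ∑_{i∈S} a_i = 0; in particular, there exist rational numbers r_1, …, r_n, not all zero, such that r_1 a_1 + ⋯ + r_n a_n = 0. -/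
open MeasureTheory

/-- some nonempty subfamily of the spoke vectors sums to zero; in particular
there is a nontrivial rational linear relation between `a 1, …, a n`. -/
theorem spokes_rational_relation {n : ℕ} [NeZero n] (P : ConvexPolygonSpokes n) :
    (∃ S : Finset (Fin n), S.Nonempty ∧ ∑ i ∈ S, P.a i = 0) ∧
    ∃ r : Fin n → ℚ, (∃ i, r i ≠ 0) ∧ ∑ i : Fin n, (r i : ℝ) • P.a i = 0 := by
  classical
  set g : Fin n → Fin n := fun i => P.σ.symm (P.wIdx i - 1) with hg
  have key : ∀ i, P.w i = P.v (g i) := by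
    intro i
    simp only [ConvexPolygonSpokes.w, ConvexPolygonSpokes.v, hg, Equiv.apply_symm_apply,
      sub_add_cancel]
  obtain ⟨x, k, hk, hx⟩ : ∃ x : Fin n, ∃ k : ℕ, 0 < k ∧ g^[k] x = x := by
    obtain ⟨a, b, hab, h⟩ := Finite.exists_ne_map_eq_of_infinite (fun m : ℕ => g^[m] 0)
    rcases hab.lt_or_gt with h' | h'
    · exact ⟨g^[a] 0, b - a, by omega,
        by rw [← Function.iterate_add_apply, show b - a + a = b by omega]; exact h.symm⟩
    · exact ⟨g^[b] 0, a - b, by omega,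
        by rw [← Function.iterate_add_apply, show a - b + b = a by omega]; exact h⟩
  set K := Function.minimalPeriod g x with hK
  have hper : g^[K] x = x := Function.isPeriodicPt_minimalPeriod g x
  have hKpos : 0 < K := Function.IsPeriodicPt.minimalPeriod_pos hk hx
  set S : Finset (Fin n) := (Finset.range K).image (fun m => g^[m] x) with hS
  have hxS : x ∈ S := by
    refine Finset.mem_image.2 ⟨0, Finset.mem_range.2 hKpos, rfl⟩
  have hsum : ∑ i ∈ S, P.a i = 0 := by
    rw [hS, Finset.sum_image (fun a ha b hb h =>
      Function.iterate_injOn_Iio_minimalPeriod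
        (Set.mem_Iio.2 (Finset.mem_range.1 ha)) (Set.mem_Iio.2 (Finset.mem_range.1 hb)) h)]
    have step : ∀ m : ℕ, P.a (g^[m] x)
        = (fun m => (2:ℝ) • P.v (g^[m] x)) (m + 1) - (fun m => (2:ℝ) • P.v (g^[m] x)) m := by
      intro m
      simp only [ConvexPolygonSpokes.a, key, Function.iterate_succ_apply', smul_sub]
    simp_rw [step]
    rw [Finset.sum_range_sub (fun m => (2:ℝ) • P.v (g^[m] x)), hper]; simp
  refine ⟨⟨S, ⟨x, hxS⟩, hsum⟩, fun i => if i ∈ S then 1 else 0, ⟨x, by simp [hxS]⟩, ?_⟩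
  have : ∀ i : Fin n, (((if i ∈ S then (1:ℚ) else 0) : ℚ) : ℝ) • P.a i
      = if i ∈ S then P.a i else 0 := by
    intro i; split <;> simp
  simp_rw [this]
  rw [Finset.sum_ite_mem, Finset.univ_inter, hsum]
end

section
/- Let a_1, a_2 be a basis of ℝ² and write a_3 = α a_1 + β a_2 and a_4 = γ a_1 + δ a_2 for real numbers α, β, γ, δ. Assume α ∈ ℚ, δ ∈ ℚ, and αδ − βγ ∈ ℚ, and assume there exist rational numbers r_1, r_2, r_3, r_4, at least three of which are nonzero, such that r_1 a_1 + r_2 a_2 + r_3 a_3 + r_4 a_4 = 0. Then β ∈ ℚ and γ ∈ ℚ. -/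
/-- if `a₁, a₂` is a basis of `ℝ²`, `a₃ = α a₁ + β a₂`,
`a₄ = γ a₁ + δ a₂` with `α, δ, αδ − βγ ∈ ℚ`, and there is a rational linear relation
`r₁ a₁ + r₂ a₂ + r₃ a₃ + r₄ a₄ = 0` with at least three of the `rᵢ` nonzero, then
`β ∈ ℚ` and `γ ∈ ℚ`. -/
theorem rational_coords_of_relation (a₁ a₂ a₃ a₄ : ℝ × ℝ)
    (hbasis : LinearIndependent ℝ ![a₁, a₂])
    (α β γ δ : ℝ) (ha₃ : a₃ = α • a₁ + β • a₂) (ha₄ : a₄ = γ • a₁ + δ • a₂)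
    (hα : ∃ q : ℚ, α = q) (hδ : ∃ q : ℚ, δ = q)
    (hdet : ∃ q : ℚ, α * δ - β * γ = q)
    (r : Fin 4 → ℚ)
    (hthree : 3 ≤ (Finset.univ.filter fun i : Fin 4 => r i ≠ 0).card)
    (hrel : (r 0 : ℝ) • a₁ + (r 1 : ℝ) • a₂ + (r 2 : ℝ) • a₃ + (r 3 : ℝ) • a₄ = 0) :
    (∃ q : ℚ, β = q) ∧ ∃ q : ℚ, γ = q := by
  -- at most one of the rᵢ is zero
  have key : ∀ i j : Fin 4, i ≠ j → r i = 0 → r j = 0 → False := by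
    intro i j hij hi hj
    have hsub : (Finset.univ.filter fun k : Fin 4 => r k ≠ 0) ⊆ Finset.univ \ {i, j} := by
      intro k hk
      simp only [Finset.mem_filter] at hk
      simp only [Finset.mem_sdiff, Finset.mem_univ, Finset.mem_insert, Finset.mem_singleton,
        true_and]
      rintro (rfl | rfl)
      · exact hk.2 hi
      · exact hk.2 hj
    have hcard := Finset.card_le_card hsub
    have h2 : (Finset.univ \ ({i, j} : Finset (Fin 4))).card = 2 := by
      rw [Finset.card_sdiff_of_subset (Finset.subset_univ _), Finset.card_pair hij]
      simp
    omega
  -- the two scalar relations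
  have hrel' : ((r 0 : ℝ) + (r 2) * α + (r 3) * γ) • a₁
      + ((r 1 : ℝ) + (r 2) * β + (r 3) * δ) • a₂ = 0 := by
    rw [ha₃, ha₄] at hrel
    rw [← hrel]
    module
  obtain ⟨e1, e2⟩ := hbasis.eq_zero_of_pair hrel'
  obtain ⟨qα, rfl⟩ := hα
  obtain ⟨qδ, rfl⟩ := hδ
  obtain ⟨qd, hqd⟩ := hdet
  by_cases h2 : r 2 = 0
  · -- then r 0, r 1, r 3 ≠ 0
    have h0 : r 0 ≠ 0 := fun h => key 0 2 (by decide) h h2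
    have h3 : r 3 ≠ 0 := fun h => key 2 3 (by decide) h2 h
    have h3' : (r 3 : ℝ) ≠ 0 := by exact_mod_cast h3
    have hγ : γ = ((-(r 0) / r 3 : ℚ) : ℝ) := by
      push_cast
      field_simp
      rw [h2] at e1; push_cast at e1; linarith
    have hγ0 : γ ≠ 0 := by
      rw [hγ]
      have : (-(r 0) / r 3 : ℚ) ≠ 0 := div_ne_zero (neg_ne_zero.2 h0) h3
      exact_mod_cast this
    refine ⟨⟨(qα * qδ - qd) / (-(r 0) / r 3), ?_⟩, ⟨-(r 0) / r 3, hγ⟩⟩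
    push_cast
    push_cast at hγ
    rw [← hγ, eq_div_iff hγ0]
    linarith [hqd]
  · by_cases h3 : r 3 = 0
    · -- r 0, r 1, r 2 ≠ 0
      have h1 : r 1 ≠ 0 := fun h => key 1 3 (by decide) h h3
      have h2' : (r 2 : ℝ) ≠ 0 := by exact_mod_cast h2
      have hβ : β = ((-(r 1) / r 2 : ℚ) : ℝ) := by
        push_cast
        field_simp
        rw [h3] at e2; push_cast at e2; linarith
      have hβ0 : β ≠ 0 := by
        rw [hβ]
        have : (-(r 1) / r 2 : ℚ) ≠ 0 := div_ne_zero (neg_ne_zero.2 h1) h2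
        exact_mod_cast this
      refine ⟨⟨-(r 1) / r 2, hβ⟩, ⟨(qα * qδ - qd) / (-(r 1) / r 2), ?_⟩⟩
      push_cast
      push_cast at hβ
      rw [← hβ, eq_div_iff hβ0]
      linarith [hqd]
    · -- r 2, r 3 ≠ 0
      have h2' : (r 2 : ℝ) ≠ 0 := by exact_mod_cast h2
      have h3' : (r 3 : ℝ) ≠ 0 := by exact_mod_cast h3
      constructor
      · refine ⟨(-(r 1) - r 3 * qδ) / r 2, ?_⟩
        push_cast
        field_simp
        linarith
      · refine ⟨(-(r 0) - r 2 * qα) / r 3, ?_⟩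
        push_cast
        field_simp
        linarith
end
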